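/- arXiv:2106.16225 — 5 statements merged into one kernel-verified Lean document; each statement's English description precedes it below -/
import Mathlib

section
/- Let C be an m×n real matrix and D be a p×q real matrix. Then the block matrix Z formed by vertically stacking (I_q ⊗ C) on top of (D ⊗ I_n) has rank(Z) = q·rank(C) + n·rank(D) − rank(C)·rank(D). -/
open Matrix Kronecker

namespace RankStackedAux

noncomputable def toHom (q n : ℕ) :
    (Fin q × Fin n → ℝ) →ₗ[ℝ] ((Fin n → ℝ) →ₗ[ℝ] (Fin q → ℝ)) where
  toFun v := (Matrix.of fun i j => v (i, j)).mulVecLin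
  map_add' u v := by
    ext w i
    simp [Matrix.mulVec, dotProduct, add_mul, Finset.sum_add_distrib, Pi.single_apply, mul_ite, mul_one, mul_zero, Finset.sum_ite_eq']
  map_smul' c v := by
    ext w i
    simp [Matrix.mulVec, dotProduct, Finset.mul_sum, mul_assoc, Pi.single_apply, mul_ite, mul_one, mul_zero, Finset.sum_ite_eq']

noncomputable def fromHom (q n : ℕ) :
    ((Fin n → ℝ) →ₗ[ℝ] (Fin q → ℝ)) →ₗ[ℝ] (Fin q × Fin n → ℝ) where
  toFun g ij := LinearMap.toMatrix' g ij.1 ij.2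
  map_add' g h := by funext ij; simp
  map_smul' c g := by funext ij; simp

lemma matrix_fromHom {q n : ℕ} (g : (Fin n → ℝ) →ₗ[ℝ] (Fin q → ℝ)) :
    (Matrix.of fun i j => fromHom q n g (i, j)) = LinearMap.toMatrix' g := rfl

lemma toHom_apply {q n : ℕ} (v : Fin q × Fin n → ℝ) :
    toHom q n v = (Matrix.of fun i j => v (i, j)).mulVecLin := rfl

lemma fromHom_toHom {q n : ℕ} (v : Fin q × Fin n → ℝ) : fromHom q n (toHom q n v) = v := by
  funext ij
  have h : LinearMap.toMatrix' ((Matrix.of fun i j => v (i, j)).mulVecLin)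
      = Matrix.of fun i j => v (i, j) := by
    rw [← Matrix.toLin'_apply']; exact LinearMap.toMatrix'_toLin' _
  show LinearMap.toMatrix' ((Matrix.of fun i j => v (i, j)).mulVecLin) ij.1 ij.2 = v ij
  rw [h]; rfl

lemma toHom_fromHom {q n : ℕ} (g : (Fin n → ℝ) →ₗ[ℝ] (Fin q → ℝ)) :
    toHom q n (fromHom q n g) = g := by
  rw [toHom_apply, matrix_fromHom, ← Matrix.toLin'_apply', Matrix.toLin'_toMatrix']

lemma mulVecLin_inj {a b : ℕ} {A B : Matrix (Fin a) (Fin b) ℝ}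
    (h : A.mulVecLin = B.mulVecLin) : A = B := by
  rw [← Matrix.toLin'_apply', ← Matrix.toLin'_apply'] at h
  exact Matrix.toLin'.injective h

lemma aux_mem (m n p q : ℕ) (C : Matrix (Fin m) (Fin n) ℝ) (D : Matrix (Fin p) (Fin q) ℝ)
    (v : Fin q × Fin n → ℝ) :
    v ∈ LinearMap.ker (Matrix.fromRows ((1 : Matrix (Fin q) (Fin q) ℝ) ⊗ₖ C)
        (D ⊗ₖ (1 : Matrix (Fin n) (Fin n) ℝ))).mulVecLin
    ↔ C * (Matrix.of fun i j => v (i, j))ᵀ = 0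
      ∧ D * (Matrix.of fun i j => v (i, j)) = 0 := by
  have hA : ∀ (i : Fin q) (j : Fin m),
      (((1 : Matrix (Fin q) (Fin q) ℝ) ⊗ₖ C) *ᵥ v) (i, j)
        = (C * (Matrix.of fun i j => v (i, j))ᵀ) j i := by
    intro i j
    simp only [Matrix.mulVec, dotProduct, Matrix.mul_apply, Fintype.sum_prod_type,
      Matrix.kroneckerMap_apply, Matrix.one_apply, Matrix.transpose_apply, Matrix.of_apply,
      ite_mul, one_mul, zero_mul]
    rw [Finset.sum_comm]
    simp [Finset.sum_ite_eq]
  have hB : ∀ (a : Fin p) (j : Fin n),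
      ((D ⊗ₖ (1 : Matrix (Fin n) (Fin n) ℝ)) *ᵥ v) (a, j)
        = (D * (Matrix.of fun i j => v (i, j))) a j := by
    intro a j
    simp only [Matrix.mulVec, dotProduct, Matrix.mul_apply, Fintype.sum_prod_type,
      Matrix.kroneckerMap_apply, Matrix.one_apply, Matrix.of_apply,
      mul_ite, ite_mul, mul_one, mul_zero, zero_mul]
    simp [Finset.sum_ite_eq]
  rw [LinearMap.mem_ker, Matrix.mulVecLin_apply, Matrix.fromRows_mulVec]
  constructor
  · intro h
    refine ⟨?_, ?_⟩
    · ext j i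
      have := congrFun h (Sum.inl (i, j))
      rw [Sum.elim_inl] at this
      rw [← hA i j, this]; rfl
    · ext a j
      have := congrFun h (Sum.inr (a, j))
      rw [Sum.elim_inr] at this
      rw [← hB a j, this]; rfl
  · rintro ⟨h1, h2⟩
    funext ij
    rcases ij with (⟨i, j⟩ | ⟨a, j⟩)
    · show (((1 : Matrix (Fin q) (Fin q) ℝ) ⊗ₖ C) *ᵥ v) (i, j) = 0
      rw [hA i j, h1]; rfl
    · show ((D ⊗ₖ (1 : Matrix (Fin n) (Fin n) ℝ)) *ᵥ v) (a, j) = 0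
      rw [hB a j, h2]; rfl

lemma mulVecLin_toMatrix' {a b : ℕ} (g : (Fin b → ℝ) →ₗ[ℝ] (Fin a → ℝ)) :
    (LinearMap.toMatrix' g).mulVecLin = g := by
  rw [← Matrix.toLin'_apply', Matrix.toLin'_toMatrix']

lemma ker_finrank (m n p q : ℕ) (C : Matrix (Fin m) (Fin n) ℝ) (D : Matrix (Fin p) (Fin q) ℝ) :
    Module.finrank ℝ (LinearMap.ker (Matrix.fromRows
        ((1 : Matrix (Fin q) (Fin q) ℝ) ⊗ₖ C)
        (D ⊗ₖ (1 : Matrix (Fin n) (Fin n) ℝ))).mulVecLin)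
      = (n - C.rank) * (q - D.rank) := by
  classical
  set R : Submodule ℝ (Fin n → ℝ) := LinearMap.range (Cᵀ).mulVecLin with hRdef
  set L : Submodule ℝ (Fin q → ℝ) := LinearMap.ker D.mulVecLin with hLdef
  set K : Submodule ℝ (Fin q × Fin n → ℝ) := LinearMap.ker (Matrix.fromRows
        ((1 : Matrix (Fin q) (Fin q) ℝ) ⊗ₖ C)
        (D ⊗ₖ (1 : Matrix (Fin n) (Fin n) ℝ))).mulVecLin with hKdef
  have memL : ∀ v : K, ∀ w : Fin n → ℝ, toHom q n v.1 w ∈ L := by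
    rintro ⟨v, hv⟩ w
    obtain ⟨-, h2⟩ := (aux_mem m n p q C D v).1 hv
    show _ ∈ LinearMap.ker D.mulVecLin
    rw [LinearMap.mem_ker, toHom_apply, Matrix.mulVecLin_apply, Matrix.mulVecLin_apply,
      Matrix.mulVec_mulVec, h2, Matrix.zero_mulVec]
  have kerR : ∀ v : K, R ≤ LinearMap.ker ((toHom q n v.1).codRestrict L (memL v)) := by
    rintro ⟨v, hv⟩ x ⟨u, rfl⟩
    obtain ⟨h1, -⟩ := (aux_mem m n p q C D v).1 hv
    have hXC : (Matrix.of fun i j => v (i, j)) * Cᵀ = 0 := by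
      have := congrArg Matrix.transpose h1
      simpa [Matrix.transpose_mul] using this
    rw [LinearMap.mem_ker]
    apply Subtype.ext
    show toHom q n v (Cᵀ.mulVecLin u) = 0
    rw [toHom_apply, Matrix.mulVecLin_apply, Matrix.mulVecLin_apply,
      Matrix.mulVec_mulVec, hXC, Matrix.zero_mulVec]
  have memK : ∀ f : ((Fin n → ℝ) ⧸ R) →ₗ[ℝ] L,
      fromHom q n (L.subtype ∘ₗ f ∘ₗ R.mkQ) ∈ K := by
    intro f
    rw [hKdef, aux_mem]
    rw [matrix_fromHom]
    have hY : (LinearMap.toMatrix' (L.subtype ∘ₗ f ∘ₗ R.mkQ)) * Cᵀ = 0 := by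
      apply mulVecLin_inj
      rw [Matrix.mulVecLin_mul, Matrix.mulVecLin_zero, mulVecLin_toMatrix']
      have h0 : ∀ u, R.mkQ (Cᵀ.mulVecLin u) = 0 := by
        intro u
        rw [Submodule.mkQ_apply, Submodule.Quotient.mk_eq_zero]
        exact ⟨u, rfl⟩
      refine LinearMap.ext fun u => ?_
      show L.subtype (f (R.mkQ (Cᵀ.mulVecLin u))) = 0
      rw [h0 u, map_zero, map_zero]
    constructor
    · have := congrArg Matrix.transpose hY
      simpa [Matrix.transpose_mul] using this
    · apply mulVecLin_inj
      rw [Matrix.mulVecLin_mul, Matrix.mulVecLin_zero, mulVecLin_toMatrix']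
      have h0 : ∀ w, D.mulVecLin ((f (R.mkQ w) : Fin q → ℝ)) = 0 := fun w => (f (R.mkQ w)).2
      refine LinearMap.ext fun w => ?_
      show D.mulVecLin (L.subtype (f (R.mkQ w))) = 0
      exact h0 w
  have E : (↥K) ≃ₗ[ℝ] (((Fin n → ℝ) ⧸ R) →ₗ[ℝ] ↥L) := by
    refine LinearEquiv.ofLinear
      ⟨⟨fun v => Submodule.liftQ R ((toHom q n v.1).codRestrict L (memL v)) (kerR v), ?_⟩, ?_⟩
      ⟨⟨fun f => ⟨fromHom q n (L.subtype ∘ₗ f ∘ₗ R.mkQ), memK f⟩, ?_⟩, ?_⟩ ?_ ?_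
    · intro u v
      apply Submodule.linearMap_qext
      ext w
      simp [map_add]
    · intro c v
      apply Submodule.linearMap_qext
      ext w
      simp [_root_.map_smul]
    · intro f g
      apply Subtype.ext
      simp [LinearMap.comp_add, LinearMap.add_comp, map_add]
    · intro c f
      apply Subtype.ext
      simp [LinearMap.comp_smul, LinearMap.smul_comp, _root_.map_smul]
    · apply LinearMap.ext; intro f
      apply Submodule.linearMap_qext
      ext w
      simp [toHom_fromHom]
    · apply LinearMap.ext; intro v
      apply Subtype.ext
      show fromHom q n (L.subtype ∘ₗ
        (Submodule.liftQ R ((toHom q n v.1).codRestrict L (memL v)) (kerR v)) ∘ₗ R.mkQ) = v.1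
      rw [Submodule.liftQ_mkQ, LinearMap.subtype_comp_codRestrict, fromHom_toHom]
  have hfr : Module.finrank ℝ ↥K = Module.finrank ℝ (((Fin n → ℝ) ⧸ R) →ₗ[ℝ] ↥L) :=
    E.finrank_eq
  rw [hfr, Module.finrank_linearMap]
  have hV : Module.finrank ℝ ((Fin n → ℝ) ⧸ R) = n - C.rank := by
    have h := Submodule.finrank_quotient_add_finrank R
    have hn : Module.finrank ℝ (Fin n → ℝ) = n := by simp
    have hrank : Module.finrank ℝ R = C.rank := by
      rw [← Matrix.rank_transpose C]; rfl
    omega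
  have hLr : Module.finrank ℝ L = q - D.rank := by
    have h := LinearMap.finrank_range_add_finrank_ker D.mulVecLin
    have hq : Module.finrank ℝ (Fin q → ℝ) = q := by simp
    have hrank : Module.finrank ℝ (LinearMap.range D.mulVecLin) = D.rank := rfl
    have hbr : Module.finrank ℝ ↥L = Module.finrank ℝ (LinearMap.ker D.mulVecLin) := rfl
    omega
  rw [hV, hLr]

end RankStackedAux

theorem rank_stacked_kronecker_identity (m n p q : ℕ)
    (C : Matrix (Fin m) (Fin n) ℝ) (D : Matrix (Fin p) (Fin q) ℝ) :
    (Matrix.fromRows ((1 : Matrix (Fin q) (Fin q) ℝ) ⊗ₖ C)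
        (D ⊗ₖ (1 : Matrix (Fin n) (Fin n) ℝ))).rank
      = q * C.rank + n * D.rank - C.rank * D.rank := by
  classical
  have hker := RankStackedAux.ker_finrank m n p q C D
  have hrn := LinearMap.finrank_range_add_finrank_ker (Matrix.fromRows
      ((1 : Matrix (Fin q) (Fin q) ℝ) ⊗ₖ C)
      (D ⊗ₖ (1 : Matrix (Fin n) (Fin n) ℝ))).mulVecLin
  have hdef : (Matrix.fromRows ((1 : Matrix (Fin q) (Fin q) ℝ) ⊗ₖ C)
      (D ⊗ₖ (1 : Matrix (Fin n) (Fin n) ℝ))).rank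
      = Module.finrank ℝ (LinearMap.range (Matrix.fromRows
        ((1 : Matrix (Fin q) (Fin q) ℝ) ⊗ₖ C)
        (D ⊗ₖ (1 : Matrix (Fin n) (Fin n) ℝ))).mulVecLin) := rfl
  rw [← hdef] at hrn
  have hdom : Module.finrank ℝ (Fin q × Fin n → ℝ) = q * n := by
    simp [Module.finrank_pi]
  rw [hdom, hker] at hrn
  have ha : C.rank ≤ n := C.rank_le_width
  have hb : D.rank ≤ q := D.rank_le_width
  set r := (Matrix.fromRows ((1 : Matrix (Fin q) (Fin q) ℝ) ⊗ₖ C)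
      (D ⊗ₖ (1 : Matrix (Fin n) (Fin n) ℝ))).rank with hrdef
  set a := C.rank with hadef
  set b := D.rank with hbdef
  obtain ⟨a', ha'⟩ := Nat.le.dest ha
  obtain ⟨b', hb'⟩ := Nat.le.dest hb
  rw [← ha', ← hb'] at hrn ⊢
  rw [Nat.add_sub_cancel_left, Nat.add_sub_cancel_left] at hrn
  have e1 : (b + b') * (a + a')
      = (a * b + a * b' + a' * b) + a' * b' := by ring
  have e2 : (b + b') * a + (a + a') * b
      = (a * b + a * b' + a' * b) + a * b := by ring
  rw [e1] at hrn
  rw [e2, Nat.add_sub_cancel]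
  exact Nat.add_right_cancel hrn
end

section
/- For real matrices A and C with the same number of columns, rank of the block matrix [A; C] (A stacked on top of C) equals rank(A) + rank(C − C·A⁻·A), where A⁻ is any generalized inverse of A (i.e., A·A⁻·A = A). -/
open Matrix

theorem rank_fromRows_generalized_inverse (m n p : ℕ)
    (A : Matrix (Fin m) (Fin n) ℝ) (C : Matrix (Fin p) (Fin n) ℝ)
    (Aminus : Matrix (Fin n) (Fin m) ℝ) (hA : A * Aminus * A = A) :
    (Matrix.fromRows A C).rank = A.rank + (C - C * Aminus * A).rank := by
  set D := C - C * Aminus * A with hD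
  have hDmul : ∀ x : Fin n → ℝ, D *ᵥ x = C *ᵥ x - C *ᵥ (Aminus *ᵥ (A *ᵥ x)) := by
    intro x
    simp [hD, sub_mulVec, mulVec_mulVec, Matrix.mul_assoc]
  have hDAA : D * Aminus * A = 0 := by
    have h1 : C * Aminus * A * Aminus * A = C * Aminus * A := by
      calc C * Aminus * A * Aminus * A = C * Aminus * (A * Aminus * A) := by
            simp only [Matrix.mul_assoc]
        _ = C * Aminus * A := by rw [hA]
    rw [hD, Matrix.sub_mul, Matrix.sub_mul, h1, sub_self]
  have hker : LinearMap.ker (fromRows A C).mulVecLin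
      = LinearMap.ker A.mulVecLin ⊓ LinearMap.ker D.mulVecLin := by
    ext x
    simp only [LinearMap.mem_ker, Submodule.mem_inf, mulVecLin_apply,
      fromRows_mulVec]
    constructor
    · intro h
      have h1 : A *ᵥ x = 0 := funext fun i => congrFun h (Sum.inl i)
      have h2 : C *ᵥ x = 0 := funext fun i => congrFun h (Sum.inr i)
      refine ⟨h1, ?_⟩
      rw [hDmul, h1, h2]
      simp
    · rintro ⟨h1, h2⟩
      rw [hDmul, h1] at h2
      simp only [mulVec_zero, sub_zero] at h2
      funext i
      cases i with
      | inl i => simpa using congrFun h1 i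
      | inr i => simpa using congrFun h2 i
  have hsup : LinearMap.ker A.mulVecLin ⊔ LinearMap.ker D.mulVecLin = ⊤ := by
    rw [eq_top_iff]
    intro x _
    have hx : x = (x - Aminus *ᵥ (A *ᵥ x)) + Aminus *ᵥ (A *ᵥ x) := by
      simp
    rw [hx]
    apply Submodule.add_mem_sup
    · show A *ᵥ _ = 0
      rw [mulVec_sub, mulVec_mulVec, mulVec_mulVec, hA, sub_self]
    · show D *ᵥ _ = 0
      rw [mulVec_mulVec, mulVec_mulVec, hDAA, zero_mulVec]
  -- rank--nullity pieces
  have rn : ∀ {q : Type} [Fintype q] (M : Matrix q (Fin n) ℝ),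
      M.rank + Module.finrank ℝ (LinearMap.ker M.mulVecLin) = n := by
    intro q _ M
    have := LinearMap.finrank_range_add_finrank_ker M.mulVecLin
    rwa [Module.finrank_fin_fun] at this
  have h1 := rn (fromRows A C)
  have h2 := rn A
  have h3 := rn D
  have h4 := Submodule.finrank_sup_add_finrank_inf_eq
    (LinearMap.ker A.mulVecLin) (LinearMap.ker D.mulVecLin)
  rw [hsup] at h4
  rw [hker] at h1
  have htop : Module.finrank ℝ
      (⊤ : Submodule ℝ (Fin n → ℝ)) = n := by
    rw [finrank_top, Module.finrank_fin_fun]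
  rw [htop] at h4
  omega
end

section
/- Let A₁ ∈ ℝ^{m₁×n₁}, A₂ ∈ ℝ^{m₂×n₂}, B ∈ ℝ^{p×n₁}. Then rank of the block matrix [A₁⊗A₂ ; B⊗I_{n₂}] equals rank(A₂)·(rank([A₁; B]) − rank(B)) + n₂·rank(B). -/
open Matrix Kronecker

/-!
Identify `ℝ^(n₁ × n₂)` with `ℝ^n₁ ⊗ ℝ^n₂`, so that the stacked matrix becomes
`x ↦ ((A₁ ⊗ A₂) x, (B ⊗ 1) x)`. The rank of a pair `(f, g)` is `rank g` plus the rank of `f`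
on `ker g`. Over a field tensoring is exact, so `ker (B ⊗ 1) = ker B ⊗ ℝ^n₂`, on which `A₁ ⊗ A₂`
acts as `(A₁ restricted to ker B) ⊗ A₂`, a map of rank `rank (A₁ restricted to ker B) * rank A₂`.
By the pair formula again, `rank (A₁ restricted to ker B) = rank [A₁; B] - rank B`.
-/

open LinearMap Module TensorProduct

section

variable {K V W₁ W₂ Y Z : Type*} [Field K]
  [AddCommGroup V] [AddCommGroup W₁] [AddCommGroup W₂] [AddCommGroup Y] [AddCommGroup Z]
  [Module K V] [Module K W₁] [Module K W₂] [Module K Y] [Module K Z]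

theorem LinearMap.finrank_range_prod [FiniteDimensional K V] (f : V →ₗ[K] W₁) (g : V →ₗ[K] W₂) :
    finrank K (range (f.prod g)) =
      finrank K (range g) + finrank K (range (f ∘ₗ (ker g).subtype)) := by
  have hfg := finrank_range_add_finrank_ker (f.prod g)
  have hg := finrank_range_add_finrank_ker g
  have hres := finrank_range_add_finrank_ker (f ∘ₗ (ker g).subtype)
  have hker : finrank K (ker (f ∘ₗ (ker g).subtype)) = finrank K (ker (f.prod g)) := by
    rw [ker_comp, ker_prod, inf_comm, ← Submodule.map_comap_subtype,
      Submodule.finrank_map_subtype_eq]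
  omega

theorem TensorProduct.finrank_range_map (f : V →ₗ[K] W₁) (h : Y →ₗ[K] Z) :
    finrank K (range (map f h)) = finrank K (range f) * finrank K (range h) := by
  have hfactor : map f h =
      map (range f).subtype (range h).subtype ∘ₗ map f.rangeRestrict h.rangeRestrict := by
    rw [← map_comp]
    rfl
  have hsurj : range (map f.rangeRestrict h.rangeRestrict) = ⊤ :=
    range_eq_top.2 (map_surjective (surjective_rangeRestrict f) (surjective_rangeRestrict h))
  have hinj : Function.Injective (map (range f).subtype (range h).subtype) :=
    map_injective_of_flat_flat _ _ (Submodule.injective_subtype _) (Submodule.injective_subtype _)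
  rw [hfactor, range_comp_of_range_eq_top _ hsurj, finrank_range_of_inj hinj,
    finrank_tensorProduct]

theorem LinearMap.ker_rTensor (g : V →ₗ[K] W₂) :
    ker (rTensor Y g) = range (rTensor Y (ker g).subtype) :=
  exact_iff.1 (Module.Flat.rTensor_exact Y (exact_subtype_ker_map g))

theorem LinearMap.finrank_range_map_prod_rTensor [FiniteDimensional K V] [FiniteDimensional K Y]
    (f : V →ₗ[K] W₁) (g : V →ₗ[K] W₂) (h : Y →ₗ[K] Z) :
    finrank K (range ((map f h).prod (rTensor Y g))) =
      finrank K (range g) * finrank K Y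
        + (finrank K (range (f.prod g)) - finrank K (range g)) * finrank K (range h) := by
  have hrestrict : range (map f h ∘ₗ (ker (rTensor Y g)).subtype) =
      range (map (f ∘ₗ (ker g).subtype) h) := by
    rw [range_comp, Submodule.range_subtype, ker_rTensor, ← range_comp, rTensor, ← map_comp,
      comp_id]
  rw [finrank_range_prod, hrestrict, finrank_range_map, rTensor, finrank_range_map, range_id,
    finrank_top, finrank_range_prod f g, Nat.add_sub_cancel_left]

theorem Matrix.toLin_fromRows {ι κ₁ κ₂ : Type*} [Fintype ι] [DecidableEq ι] [Fintype κ₁] [Fintype κ₂]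
    (v : Basis ι K V) (w₁ : Basis κ₁ K W₁) (w₂ : Basis κ₂ K W₂)
    (A : Matrix κ₁ ι K) (B : Matrix κ₂ ι K) :
    toLin v (w₁.prod w₂) (fromRows A B) = (toLin v w₁ A).prod (toLin v w₂ B) := by
  classical
  rw [← LinearMap.toMatrix_symm, LinearEquiv.symm_apply_eq]
  ext (i | i) j <;> simp [LinearMap.toMatrix_apply, Finsupp.single_apply]

end

theorem rank_stacked_kronecker_general (m₁ n₁ m₂ n₂ p : ℕ)
    (A₁ : Matrix (Fin m₁) (Fin n₁) ℝ) (A₂ : Matrix (Fin m₂) (Fin n₂) ℝ)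
    (B : Matrix (Fin p) (Fin n₁) ℝ) :
    (Matrix.fromRows (A₁ ⊗ₖ A₂) (B ⊗ₖ (1 : Matrix (Fin n₂) (Fin n₂) ℝ))).rank
      = A₂.rank * ((Matrix.fromRows A₁ B).rank - B.rank) + n₂ * B.rank := by
  let e (n : ℕ) := Pi.basisFun ℝ (Fin n)
  rw [rank_eq_finrank_range_toLin _ (((e m₁).tensorProduct (e m₂)).prod
      ((e p).tensorProduct (e n₂))) ((e n₁).tensorProduct (e n₂)),
    toLin_fromRows, toLin_kronecker, toLin_kronecker, toLin_one, ← rTensor,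
    finrank_range_map_prod_rTensor, finrank_fin_fun,
    rank_eq_finrank_range_toLin (fromRows A₁ B) ((e m₁).prod (e p)) (e n₁), toLin_fromRows,
    rank_eq_finrank_range_toLin A₂ (e m₂) (e n₂), rank_eq_finrank_range_toLin B (e p) (e n₁)]
  ring
end

section
/- Consider a 2-layer linear network with weight matrices W² ∈ ℝ^{K×M₁} and W¹ ∈ ℝ^{M₁×r}, each of full rank min of its dimensions. Then the stacked matrix A_o = [W²ᵀ ⊗ I_r ; I_K ⊗ W¹] has rank equal to q(r + K − q), where q = min(r, M₁, K). -/
open Matrix Kronecker LinearMap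

noncomputable def homSub {K r : ℕ} (S : Submodule ℝ (Fin K → ℝ)) (T : Submodule ℝ (Fin r → ℝ)) :
    Submodule ℝ ((Fin r → ℝ) →ₗ[ℝ] (Fin K → ℝ)) where
  carrier := {f | (∀ x, f x ∈ S) ∧ ∀ y ∈ T, f y = 0}
  add_mem' := by
    rintro f g ⟨hf1, hf2⟩ ⟨hg1, hg2⟩
    exact ⟨fun x => S.add_mem (hf1 x) (hg1 x),
      fun y hy => by simp [hf2 y hy, hg2 y hy]⟩
  zero_mem' := ⟨fun x => S.zero_mem, fun y hy => rfl⟩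
  smul_mem' := by
    rintro c f ⟨hf1, hf2⟩
    exact ⟨fun x => S.smul_mem c (hf1 x), fun y hy => by simp [hf2 y hy]⟩

lemma finrank_homSub {K r : ℕ} (S : Submodule ℝ (Fin K → ℝ)) (T : Submodule ℝ (Fin r → ℝ)) :
    Module.finrank ℝ (homSub S T) = (r - Module.finrank ℝ T) * Module.finrank ℝ S := by
  classical
  let G : (((Fin r → ℝ) ⧸ T) →ₗ[ℝ] S) →ₗ[ℝ] ((Fin r → ℝ) →ₗ[ℝ] (Fin K → ℝ)) :=
    { toFun := fun g => S.subtype ∘ₗ g ∘ₗ T.mkQ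
      map_add' := fun g₁ g₂ => by
        simp [LinearMap.add_comp, LinearMap.comp_add]
      map_smul' := fun c g => by
        simp [LinearMap.smul_comp, LinearMap.comp_smul] }
  have hGinj : Function.Injective G := by
    intro g₁ g₂ h
    refine LinearMap.ext fun q => ?_
    obtain ⟨x, rfl⟩ := T.mkQ_surjective q
    have := LinearMap.congr_fun h x
    exact Subtype.ext (by simpa [G] using this)
  have hGrange : LinearMap.range G = homSub S T := by
    apply le_antisymm
    · rintro _ ⟨g, rfl⟩
      refine ⟨fun x => (g (T.mkQ x)).2, fun y hy => ?_⟩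
      have : T.mkQ y = 0 := (Submodule.Quotient.mk_eq_zero T).2 hy
      simp [G, this]
    · rintro f ⟨hr, hk⟩
      refine ⟨T.liftQ (f.codRestrict S hr) (fun y hy => ?_), ?_⟩
      · simp only [LinearMap.mem_ker]
        exact Subtype.ext (by simpa using hk y hy)
      · refine LinearMap.ext fun x => ?_
        simp [G, Submodule.liftQ_apply]
  rw [← hGrange, LinearMap.finrank_range_of_inj hGinj, Module.finrank_linearMap]
  congr 1
  have := Submodule.finrank_quotient_add_finrank T
  have hr : Module.finrank ℝ (Fin r → ℝ) = r := by
    simp [Module.finrank_fintype_fun_eq_card]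
  omega

lemma kron_one_mulVec {m n p : ℕ} (M : Matrix (Fin m) (Fin n) ℝ) (v : Fin n × Fin p → ℝ) :
    (M ⊗ₖ (1 : Matrix (Fin p) (Fin p) ℝ)) *ᵥ v
      = fun q => (M * Matrix.of fun a b => v (a, b)) q.1 q.2 := by
  funext ⟨i, j⟩
  simp [Matrix.mulVec, dotProduct, Fintype.sum_prod_type, Matrix.mul_apply,
    Matrix.one_apply, mul_ite, ite_mul, mul_zero, zero_mul, mul_one]

lemma one_kron_mulVec {m n p : ℕ} (N : Matrix (Fin m) (Fin n) ℝ) (v : Fin p × Fin n → ℝ) :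
    ((1 : Matrix (Fin p) (Fin p) ℝ) ⊗ₖ N) *ᵥ v
      = fun q => ((Matrix.of fun a b => v (a, b)) * Nᵀ) q.1 q.2 := by
  funext ⟨i, j⟩
  simp [Matrix.mulVec, dotProduct, Fintype.sum_prod_type, Matrix.mul_apply,
    Matrix.one_apply, mul_ite, ite_mul, mul_zero, zero_mul, one_mul, mul_comm]

lemma mulVecLin_eq_zero_iff {m n : ℕ} (M : Matrix (Fin m) (Fin n) ℝ) :
    (∀ x, M *ᵥ x = 0) ↔ M = 0 := by
  constructor
  · intro h
    have : Matrix.toLin' M = Matrix.toLin' (0 : Matrix (Fin m) (Fin n) ℝ) := by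
      refine LinearMap.ext fun x => ?_
      simp [Matrix.toLin'_apply, h x]
    exact Matrix.toLin'.injective this
  · rintro rfl x; simp

lemma arith (K M₁ r : ℕ) :
    K*r - (K - min K M₁)*(r - min M₁ r)
      = min r (min M₁ K) * (r + K - min r (min M₁ K)) := by
  rcases le_total K M₁ with h1 | h1
  · rw [min_eq_left h1, Nat.sub_self, zero_mul, Nat.sub_zero, min_eq_right h1]
    rcases le_total r K with h3 | h3
    · rw [min_eq_left h3, show r + K - r = K by omega, mul_comm]
    · rw [min_eq_right h3, show r + K - K = r by omega, mul_comm]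
  · rw [min_eq_right h1, min_eq_left h1]
    rcases le_total M₁ r with h2 | h2
    · rw [min_eq_left h2, min_eq_right h2]
      refine Nat.sub_eq_of_eq_add ?_
      zify [h1, h2, show M₁ ≤ r + K by omega]
      ring
    · rw [min_eq_right h2, min_eq_left h2, Nat.sub_self, mul_zero, Nat.sub_zero,
        show r + K - r = K by omega, mul_comm]

theorem rank_Ao_two_layer (K M₁ r : ℕ)
    (W₂ : Matrix (Fin K) (Fin M₁) ℝ) (W₁ : Matrix (Fin M₁) (Fin r) ℝ)
    (h₂ : W₂.rank = min K M₁) (h₁ : W₁.rank = min M₁ r) :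
    (Matrix.fromRows (W₂ᵀ ⊗ₖ (1 : Matrix (Fin r) (Fin r) ℝ))
        ((1 : Matrix (Fin K) (Fin K) ℝ) ⊗ₖ W₁)).rank
      = min r (min M₁ K) * (r + K - min r (min M₁ K)) := by
  classical
  set A := Matrix.fromRows (W₂ᵀ ⊗ₖ (1 : Matrix (Fin r) (Fin r) ℝ))
      ((1 : Matrix (Fin K) (Fin K) ℝ) ⊗ₖ W₁) with hA
  set S : Submodule ℝ (Fin K → ℝ) := LinearMap.ker (W₂ᵀ.mulVecLin) with hS
  set T : Submodule ℝ (Fin r → ℝ) := LinearMap.range (W₁ᵀ.mulVecLin) with hT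
  let Φ : (Fin K × Fin r → ℝ) ≃ₗ[ℝ] Matrix (Fin K) (Fin r) ℝ :=
    { toFun := fun v => Matrix.of fun k j => v (k, j)
      map_add' := fun _ _ => rfl
      map_smul' := fun _ _ => rfl
      invFun := fun M p => M p.1 p.2
      left_inv := fun v => rfl
      right_inv := fun M => rfl }
  let E : (Fin K × Fin r → ℝ) ≃ₗ[ℝ] ((Fin r → ℝ) →ₗ[ℝ] (Fin K → ℝ)) :=
    Φ.trans Matrix.toLin'
  -- kernel characterization
  have hmem : ∀ v : Fin K × Fin r → ℝ,
      v ∈ LinearMap.ker A.mulVecLin ↔ E v ∈ homSub S T := by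
    intro v
    set V : Matrix (Fin K) (Fin r) ℝ := Matrix.of fun k j => v (k, j) with hV
    have hEv : ∀ x, E v x = V *ᵥ x := fun x => Matrix.toLin'_apply V x
    have hker : v ∈ LinearMap.ker A.mulVecLin ↔ W₂ᵀ * V = 0 ∧ V * W₁ᵀ = 0 := by
      rw [LinearMap.mem_ker, Matrix.mulVecLin_apply, hA, Matrix.fromRows_mulVec,
        kron_one_mulVec, one_kron_mulVec]
      constructor
      · intro h
        constructor
        · ext i j
          have := congrFun h (Sum.inl (i, j))
          simpa using this
        · ext i j
          have := congrFun h (Sum.inr (i, j))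
          simpa using this
      · rintro ⟨ha, hb⟩
        funext x
        rcases x with (⟨i, j⟩ | ⟨i, j⟩)
        · simpa using congrFun (congrFun ha i) j
        · simpa using congrFun (congrFun hb i) j
    rw [hker]
    constructor
    · rintro ⟨ha, hb⟩
      constructor
      · intro x
        show W₂ᵀ *ᵥ (E v x) = 0
        rw [hEv, Matrix.mulVec_mulVec, ha, Matrix.zero_mulVec]
      · rintro y ⟨z, rfl⟩
        rw [hEv]
        show V *ᵥ (W₁ᵀ *ᵥ z) = 0
        rw [Matrix.mulVec_mulVec, hb, Matrix.zero_mulVec]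
    · rintro ⟨ha, hb⟩
      constructor
      · refine (mulVecLin_eq_zero_iff _).1 fun x => ?_
        rw [← Matrix.mulVec_mulVec]
        have := ha x
        rw [hS, LinearMap.mem_ker, Matrix.mulVecLin_apply, hEv] at this
        exact this
      · refine (mulVecLin_eq_zero_iff _).1 fun z => ?_
        rw [← Matrix.mulVec_mulVec, ← hEv]
        exact hb (W₁ᵀ *ᵥ z) ⟨z, rfl⟩
  have hmap : (LinearMap.ker A.mulVecLin).map (E : (Fin K × Fin r → ℝ) →ₗ[ℝ] _) = homSub S T := by
    ext f
    rw [Submodule.mem_map_equiv, hmem (E.symm f)]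
    simp
  -- dimensions
  have hTfin : Module.finrank ℝ T = min M₁ r := by
    have : W₁ᵀ.rank = min M₁ r := by rw [Matrix.rank_transpose]; exact h₁
    exact this
  have hrk2 : W₂ᵀ.rank = min K M₁ := by rw [Matrix.rank_transpose]; exact h₂
  have hSfin : Module.finrank ℝ S = K - min K M₁ := by
    have hrn := LinearMap.finrank_range_add_finrank_ker (W₂ᵀ.mulVecLin)
    have hK : Module.finrank ℝ (Fin K → ℝ) = K := by
      simp [Module.finrank_fintype_fun_eq_card]
    have hrange : Module.finrank ℝ (LinearMap.range W₂ᵀ.mulVecLin) = min K M₁ := hrk2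
    have hle : min K M₁ ≤ K := min_le_left _ _
    rw [hS]
    omega
  have hUfin : Module.finrank ℝ (homSub S T) = (K - min K M₁) * (r - min M₁ r) := by
    rw [finrank_homSub, hTfin, hSfin]
    exact mul_comm _ _
  have hkerfin : Module.finrank ℝ (LinearMap.ker A.mulVecLin)
      = (K - min K M₁) * (r - min M₁ r) := by
    rw [← LinearEquiv.finrank_map_eq E (LinearMap.ker A.mulVecLin), hmap, hUfin]
  have hrn := LinearMap.finrank_range_add_finrank_ker A.mulVecLin
  have hKr : Module.finrank ℝ (Fin K × Fin r → ℝ) = K * r := by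
    simp [Module.finrank_fintype_fun_eq_card]
  have hrank : A.rank = Module.finrank ℝ (LinearMap.range A.mulVecLin) := rfl
  rw [hrank, ← arith K M₁ r]
  have hle : (K - min K M₁) * (r - min M₁ r) ≤ K * r :=
    Nat.mul_le_mul (Nat.sub_le _ _) (Nat.sub_le _ _)
  rw [hkerfin, hKr] at hrn
  omega
end

section
/- Let ℒ(W¹,…,W^L) = E[½‖y − W^L⋯W¹x‖²] be the population squared loss of a deep linear network. Then the second derivative block of ℒ with respect to W^k twice equals (W^{k+1:L} W^{L:k+1}) ⊗ (W^{k−1:1} Σ W^{1:k−1}), where Σ = E[xxᵀ], W^{k+1:L} = (W^{k+1})ᵀ⋯(W^L)ᵀ, and W^{k−1:1} = W^{k−1}⋯W¹. -/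
/-!
Write the prediction of the network as `A V B x`, with `V = W^k` and `A`, `B` the products of
the layers above and below it. As a function of `v = vec_r(V)` it is linear, `J(x) v`, with
`J(x) = A ⊗ (B x)ᵀ`. The loss is therefore a quadratic polynomial in `v` (linear least
squares), whose Hessian is `E[J(x)ᵀ J(x)]`. By the mixed-product rule
`J(x)ᵀ J(x) = AᵀA ⊗ (B x)(B x)ᵀ`, and taking expectations gives `AᵀA ⊗ B Σ Bᵀ`.
Square integrability of `(x, y)` makes every moment involved finite.
-/

open Matrix Kronecker MeasureTheory

theorem fderiv_fderiv_apply_of_eq_add_bilinear {E : Type*} [NormedAddCommGroup E] [NormedSpace ℝ E]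
    {f : E → ℝ} (c : ℝ) (ℓ : E →L[ℝ] ℝ) (B : E →L[ℝ] E →L[ℝ] ℝ) (hf : ∀ v, f v = c + ℓ v + B v v)
    (v₀ u w : E) : fderiv ℝ (fun v => fderiv ℝ f v w) v₀ u = B u w + B w u := by
  have hderiv : ∀ v, fderiv ℝ f v w = ℓ w + (B.flip w + B w) v := by
    intro v
    have h : HasFDerivAt (fun v => c + ℓ v + B v v) _ v := (ℓ.hasFDerivAt.const_add c).fun_add
      (B.hasFDerivAt_of_bilinear (hasFDerivAt_id v) (hasFDerivAt_id v))
    rw [funext hf, h.fderiv]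
    simp
  simp only [hderiv]
  rw [((B.flip w + B w).hasFDerivAt.const_add (ℓ w)).fderiv]
  simp [add_comm]

theorem fderiv_fderiv_apply_single_of_eq_quadratic {ι : Type*} [Fintype ι] [DecidableEq ι]
    {f : (ι → ℝ) → ℝ} (c : ℝ) (l : ι → ℝ) (Q : Matrix ι ι ℝ)
    (hf : ∀ v, f v = c + l ⬝ᵥ v + v ⬝ᵥ Q *ᵥ v) (v₀ : ι → ℝ) (i j : ι) :
    fderiv ℝ (fun v => fderiv ℝ f v (Pi.single j 1)) v₀ (Pi.single i 1) = Q i j + Q j i := by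
  let B : (ι → ℝ) →L[ℝ] (ι → ℝ) →L[ℝ] ℝ :=
    LinearMap.toContinuousLinearMap
      (LinearMap.toContinuousLinearMap.toLinearMap ∘ₗ Matrix.toLinearMap₂' ℝ Q)
  have hB : ∀ v w, B v w = v ⬝ᵥ Q *ᵥ w := fun v w => Matrix.toLinearMap₂'_apply' Q v w
  rw [fderiv_fderiv_apply_of_eq_add_bilinear c
    (LinearMap.toContinuousLinearMap (dotProductBilin ℝ ℝ l)) B (fun v => by rw [hf, hB]; rfl)]
  simp [hB]

section LeastSquares

variable {Ω κ ι : Type*} [MeasurableSpace Ω] {μ : Measure Ω} [Fintype ι]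

theorem integrable_dotProduct_const {l : Ω → ι → ℝ} (hl : ∀ i, Integrable (fun ω => l ω i) μ)
    (v : ι → ℝ) : Integrable (fun ω => l ω ⬝ᵥ v) μ :=
  integrable_finsetSum _ fun i _ => (hl i).mul_const (v i)

theorem integral_dotProduct_const {l : Ω → ι → ℝ} (hl : ∀ i, Integrable (fun ω => l ω i) μ)
    (v : ι → ℝ) : ∫ ω, l ω ⬝ᵥ v ∂μ = (fun i => ∫ ω, l ω i ∂μ) ⬝ᵥ v := by
  simp only [dotProduct]
  rw [integral_finsetSum _ fun i _ => (hl i).mul_const (v i)]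
  simp only [integral_mul_const]

theorem integrable_dotProduct_mulVec_self {Q : Ω → Matrix ι ι ℝ}
    (hQ : ∀ i j, Integrable (fun ω => Q ω i j) μ) (v : ι → ℝ) :
    Integrable (fun ω => v ⬝ᵥ Q ω *ᵥ v) μ := by
  simp only [dotProduct_comm v]
  exact integrable_dotProduct_const (l := fun ω => Q ω *ᵥ v)
    (fun i => integrable_dotProduct_const (hQ i) v) v

theorem integral_dotProduct_mulVec_self {Q : Ω → Matrix ι ι ℝ}
    (hQ : ∀ i j, Integrable (fun ω => Q ω i j) μ) (v : ι → ℝ) :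
    ∫ ω, v ⬝ᵥ Q ω *ᵥ v ∂μ = v ⬝ᵥ (of fun i j => ∫ ω, Q ω i j ∂μ) *ᵥ v := by
  simp only [dotProduct_comm v]
  rw [integral_dotProduct_const (l := fun ω => Q ω *ᵥ v)
    (fun i => integrable_dotProduct_const (hQ i) v)]
  congr 1
  funext i
  exact integral_dotProduct_const (hQ i) v

theorem memLp_mulVec_apply {p : ENNReal} {X : Ω → ι → ℝ} (hX : ∀ d, MemLp (fun ω => X ω d) p μ)
    (B : Matrix κ ι ℝ) (s : κ) : MemLp (fun ω => (B *ᵥ X ω) s) p μ :=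
  memLp_finsetSum _ fun d _ => (hX d).const_mul (B s d)

theorem half_sum_sq_sub_mulVec [Fintype κ] (y : κ → ℝ) (J : Matrix κ ι ℝ) (v : ι → ℝ) :
    (1 / 2) * ∑ c, (y c - (J *ᵥ v) c) ^ 2
      = (1 / 2) * ∑ c, y c ^ 2 - (Jᵀ *ᵥ y) ⬝ᵥ v + (1 / 2) * (v ⬝ᵥ (Jᵀ * J) *ᵥ v) := by
  have hlin : (Jᵀ *ᵥ y) ⬝ᵥ v = y ⬝ᵥ J *ᵥ v := by rw [mulVec_transpose, dotProduct_mulVec]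
  have hquad : v ⬝ᵥ (Jᵀ * J) *ᵥ v = J *ᵥ v ⬝ᵥ J *ᵥ v := by
    rw [← mulVec_mulVec, mulVec_transpose, dotProduct_comm, dotProduct_mulVec]
  have hsq : ∀ w : κ → ℝ, ∑ c, w c ^ 2 = w ⬝ᵥ w := fun w => by simp [dotProduct, sq]
  rw [hlin, hquad, hsq, hsq, ← Pi.sub_def, sub_dotProduct, dotProduct_sub, dotProduct_sub,
    dotProduct_comm (J *ᵥ v) y]
  ring

theorem integral_mulVec_apply_mul_mulVec_apply {X : Ω → ι → ℝ}
    (hX : ∀ d, MemLp (fun ω => X ω d) 2 μ) (C : Matrix ι ι ℝ)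
    (hC : ∀ d e, C d e = ∫ ω, X ω d * X ω e ∂μ) (B : Matrix κ ι ℝ) (s t : κ) :
    ∫ ω, (B *ᵥ X ω) s * (B *ᵥ X ω) t ∂μ = (B * C * Bᵀ) s t := by
  have hXX : ∀ d e, Integrable (fun ω => B s d * B t e * (X ω d * X ω e)) μ := fun d e =>
    ((hX d).integrable_mul (hX e)).const_mul _
  have hexpand : ∀ ω, (B *ᵥ X ω) s * (B *ᵥ X ω) t = ∑ d, ∑ e, B s d * B t e * (X ω d * X ω e) :=
    fun ω => by
      simp only [mulVec, dotProduct, Finset.sum_mul_sum]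
      exact Finset.sum_congr rfl fun d _ => Finset.sum_congr rfl fun e _ => by ring
  simp only [hexpand]
  rw [integral_finsetSum _ fun d _ => integrable_finsetSum _ fun e _ => hXX d e]
  simp only [integral_finsetSum _ fun e _ => hXX _ e, integral_const_mul, ← hC, mul_apply,
    transpose_apply, Finset.sum_mul]
  rw [Finset.sum_comm]
  exact Finset.sum_congr rfl fun d _ => Finset.sum_congr rfl fun e _ => by ring

theorem fderiv_fderiv_integral_half_sum_sq_sub_mulVec [Fintype κ] [DecidableEq ι]
    (y : Ω → κ → ℝ) (J : Ω → Matrix κ ι ℝ) (hy : ∀ c, MemLp (fun ω => y ω c) 2 μ)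
    (hJ : ∀ c i, MemLp (fun ω => J ω c i) 2 μ) {f : (ι → ℝ) → ℝ}
    (hf : ∀ v, f v = ∫ ω, (1 / 2) * ∑ c, (y ω c - (J ω *ᵥ v) c) ^ 2 ∂μ) (v₀ : ι → ℝ) (i j : ι) :
    fderiv ℝ (fun v => fderiv ℝ f v (Pi.single j 1)) v₀ (Pi.single i 1)
      = ∫ ω, ((J ω)ᵀ * J ω) i j ∂μ := by
  have hyy : Integrable (fun ω => (1 / 2) * ∑ c, y ω c ^ 2) μ :=
    (integrable_finsetSum _ fun c _ => (hy c).integrable_sq).const_mul _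
  have hJy : ∀ i, Integrable (fun ω => ((J ω)ᵀ *ᵥ y ω) i) μ := fun i =>
    integrable_finsetSum _ fun c _ => (hJ c i).integrable_mul (hy c)
  have hJJ : ∀ i j, Integrable (fun ω => ((J ω)ᵀ * J ω) i j) μ := fun i j =>
    integrable_finsetSum _ fun c _ => (hJ c i).integrable_mul (hJ c j)
  have hquad : ∀ v, f v = ∫ ω, (1 / 2) * ∑ c, y ω c ^ 2 ∂μ
      + (-fun i => ∫ ω, ((J ω)ᵀ *ᵥ y ω) i ∂μ) ⬝ᵥ v
      + v ⬝ᵥ ((1 / 2 : ℝ) • of fun i j => ∫ ω, ((J ω)ᵀ * J ω) i j ∂μ) *ᵥ v := by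
    intro v
    simp only [hf, half_sum_sq_sub_mulVec]
    have hlin := integrable_dotProduct_const hJy v
    have hsq := (integrable_dotProduct_mulVec_self hJJ v).const_mul (1 / 2 : ℝ)
    rw [integral_add (f := fun ω => _ - _) (hyy.sub hlin) hsq, integral_sub hyy hlin]
    simp only [integral_const_mul]
    rw [integral_dotProduct_const hJy, integral_dotProduct_mulVec_self hJJ, neg_dotProduct,
      smul_mulVec, dotProduct_smul, smul_eq_mul, sub_eq_add_neg]
  have hsymm : ∀ ω, ((J ω)ᵀ * J ω) j i = ((J ω)ᵀ * J ω) i j := fun ω => by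
    rw [← transpose_apply ((J ω)ᵀ * J ω) i j, transpose_mul, transpose_transpose]
  rw [fderiv_fderiv_apply_single_of_eq_quadratic _ _ _ hquad]
  simp only [Matrix.smul_apply, of_apply, smul_eq_mul, hsymm]
  ring

end LeastSquares

theorem mul_of_mul_mulVec {R κ m n o : Type*} [CommSemiring R] [Fintype m] [Fintype n] [Fintype o]
    (A : Matrix κ m R) (V : m × n → R) (B : Matrix n o R) (x : o → R) :
    (A * of (fun r s => V (r, s)) * B) *ᵥ x
      = (of fun c (rs : m × n) => A c rs.1 * (B *ᵥ x) rs.2) *ᵥ V := by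
  ext c
  rw [← mulVec_mulVec, ← mulVec_mulVec]
  generalize B *ᵥ x = z
  simp only [mulVec, dotProduct, of_apply, Fintype.sum_prod_type, Finset.mul_sum]
  exact Finset.sum_congr rfl fun r _ => Finset.sum_congr rfl fun s _ => by ring

theorem transpose_mul_self_of_mul_eq_kronecker {R κ m n : Type*} [CommSemiring R] [Fintype κ]
    (A : Matrix κ m R) (z : n → R) :
    (of fun c (rs : m × n) => A c rs.1 * z rs.2)ᵀ * (of fun c (rs : m × n) => A c rs.1 * z rs.2)
      = (Aᵀ * A) ⊗ₖ vecMulVec z z := by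
  ext ⟨r, s⟩ ⟨r', s'⟩
  simp only [mul_apply, transpose_apply, of_apply, kroneckerMap_apply, vecMulVec_apply,
    Finset.sum_mul]
  exact Finset.sum_congr rfl fun c _ => by ring

theorem memLp_two_id_of_integrable_sq_norm_add {E F : Type*} [NormedAddCommGroup E]
    [NormedAddCommGroup F] [MeasurableSpace E] [MeasurableSpace F] [BorelSpace E] [BorelSpace F]
    [SecondCountableTopology E] [SecondCountableTopology F] {μ : Measure (E × F)}
    (h : Integrable (fun p => (‖p.1‖ + ‖p.2‖) ^ 2) μ) : MemLp id 2 μ := by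
  have hsum : MemLp (fun p : E × F => ‖p.1‖ + ‖p.2‖) 2 μ :=
    (memLp_two_iff_integrable_sq (by fun_prop)).2 h
  refine hsum.of_le aestronglyMeasurable_id (ae_of_all _ fun p => ?_)
  rw [Real.norm_of_nonneg (by positivity), id, Prod.norm_def]
  exact max_le (le_add_of_nonneg_right (norm_nonneg _)) (le_add_of_nonneg_left (norm_nonneg _))

theorem hessian_diagonal_block_deep_linear_general (L k : ℕ) (M : ℕ → ℕ)
    -- `S l` is the suffix product `W (L-1) * ⋯ * W l`, so `S (k+1)` is `W^{L:k+2⋯}` above layer `k`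
    (S : ∀ l : ℕ, Matrix (Fin (M L)) (Fin (M l)) ℝ)
    -- `F l` is the transposed prefix product `(W 0)ᵀ * ⋯ * (W (l-1))ᵀ`
    (F : ∀ l : ℕ, Matrix (Fin (M 0)) (Fin (M l)) ℝ)
    -- data distribution on input-output pairs
    (μ : Measure ((Fin (M 0) → ℝ) × (Fin (M L) → ℝ)))
    (hInt : Integrable (fun p => (‖p.1‖ + ‖p.2‖) ^ 2) μ)
    -- the (uncentered) input covariance Σ = E[x xᵀ]
    (Scov : Matrix (Fin (M 0)) (Fin (M 0)) ℝ)
    (hScov : ∀ a b, Scov a b = ∫ p, p.1 a * p.1 b ∂μ)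
    -- the population squared loss as a function of vec_r(W^k), the other weights fixed
    (f : (Fin (M (k+1)) × Fin (M k) → ℝ) → ℝ)
    (hf : ∀ v, f v = ∫ p, (1/2) * ∑ c,
      (p.2 c - ((S (k+1) * Matrix.of (fun i j => v (i, j)) * (F k)ᵀ) *ᵥ p.1) c) ^ 2 ∂μ) :
    ∀ (v₀ : Fin (M (k+1)) × Fin (M k) → ℝ) (i j : Fin (M (k+1)) × Fin (M k)),
      fderiv ℝ (fun v => fderiv ℝ f v (Pi.single j 1)) v₀ (Pi.single i 1)
        = (((S (k+1))ᵀ * S (k+1)) ⊗ₖ ((F k)ᵀ * Scov * F k)) i j := by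
  intro v₀ i j
  have hmom := memLp_two_id_of_integrable_sq_norm_add hInt
  have hx : ∀ d, MemLp (fun p : (Fin (M 0) → ℝ) × (Fin (M L) → ℝ) => p.1 d) 2 μ := fun d =>
    ContinuousLinearMap.comp_memLp' ((ContinuousLinearMap.proj (R := ℝ) (φ := fun _ => ℝ) d).comp
      (ContinuousLinearMap.fst ℝ _ (Fin (M L) → ℝ))) hmom
  have hy : ∀ c, MemLp (fun p : (Fin (M 0) → ℝ) × (Fin (M L) → ℝ) => p.2 c) 2 μ := fun c =>
    ContinuousLinearMap.comp_memLp' ((ContinuousLinearMap.proj (R := ℝ) (φ := fun _ => ℝ) c).comp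
      (ContinuousLinearMap.snd ℝ (Fin (M 0) → ℝ) _)) hmom
  let J : (Fin (M 0) → ℝ) × (Fin (M L) → ℝ) → Matrix (Fin (M L)) (Fin (M (k+1)) × Fin (M k)) ℝ :=
    fun p => of fun c rs => S (k+1) c rs.1 * ((F k)ᵀ *ᵥ p.1) rs.2
  have hJ : ∀ c rs, MemLp (fun p => J p c rs) 2 μ := fun c rs =>
    (memLp_mulVec_apply hx _ rs.2).const_mul _
  have hfJ : ∀ v, f v = ∫ p, (1 / 2) * ∑ c, (p.2 c - (J p *ᵥ v) c) ^ 2 ∂μ := fun v => by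
    simp only [hf, mul_of_mul_mulVec, J]
  rw [fderiv_fderiv_integral_half_sum_sq_sub_mulVec (fun p => p.2) J hy hJ hfJ]
  simp only [J, transpose_mul_self_of_mul_eq_kronecker, kroneckerMap_apply, vecMulVec_apply,
    integral_const_mul, integral_mulVec_apply_mul_mulVec_apply hx Scov hScov, transpose_transpose]

theorem hessian_diagonal_block_deep_linear (L k : ℕ) (hk : k < L) (M : ℕ → ℕ)
    (W : ∀ l : ℕ, Matrix (Fin (M (l+1))) (Fin (M l)) ℝ)
    -- `S l` is the suffix product `W (L-1) * ⋯ * W l`, so `S (k+1)` is `W^{L:k+2⋯}` above layer `k`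
    (S : ∀ l : ℕ, Matrix (Fin (M L)) (Fin (M l)) ℝ)
    (hSL : S L = 1) (hS : ∀ l < L, S l = S (l+1) * W l)
    -- `F l` is the transposed prefix product `(W 0)ᵀ * ⋯ * (W (l-1))ᵀ`
    (F : ∀ l : ℕ, Matrix (Fin (M 0)) (Fin (M l)) ℝ)
    (hF0 : F 0 = 1) (hF : ∀ l < L, F (l+1) = F l * (W l)ᵀ)
    -- data distribution on input-output pairs
    (μ : Measure ((Fin (M 0) → ℝ) × (Fin (M L) → ℝ))) [IsProbabilityMeasure μ]
    (hInt : Integrable (fun p => (‖p.1‖ + ‖p.2‖) ^ 2) μ)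
    -- the (uncentered) input covariance Σ = E[x xᵀ]
    (Scov : Matrix (Fin (M 0)) (Fin (M 0)) ℝ)
    (hScov : ∀ a b, Scov a b = ∫ p, p.1 a * p.1 b ∂μ)
    -- the population squared loss as a function of vec_r(W^k), the other weights fixed
    (f : (Fin (M (k+1)) × Fin (M k) → ℝ) → ℝ)
    (hf : ∀ v, f v = ∫ p, (1/2) * ∑ c,
      (p.2 c - ((S (k+1) * Matrix.of (fun i j => v (i, j)) * (F k)ᵀ) *ᵥ p.1) c) ^ 2 ∂μ) :
    ∀ (v₀ : Fin (M (k+1)) × Fin (M k) → ℝ) (i j : Fin (M (k+1)) × Fin (M k)),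
      fderiv ℝ (fun v => fderiv ℝ f v (Pi.single j 1)) v₀ (Pi.single i 1)
        = (((S (k+1))ᵀ * S (k+1)) ⊗ₖ ((F k)ᵀ * Scov * F k)) i j :=
  hessian_diagonal_block_deep_linear_general L k M S F μ hInt Scov hScov f hf
end
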